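/- Discrete irrotational fields are gradients (Lemma 2.4, necessity): assume (SgnCancel): for every primary cell i and every vertex ν, the sum of t_{e,ν}·n_{e,i} over all edges e incident to both i and ν equals 0; (Euler): card C + card V = card E + 1; (KerSkew): the only dual scalar field ψ with ∇̃⊥_h ψ = 0 is ψ = 0; and (KerGrad): every primary scalar field φ with ∇_h φ = 0 is constant. Then every discrete vector field u with ∇̃_h×u = 0 can be written as u = ∇_h φ for some primary discrete scalar field φ, and φ is unique up to an additive constant (unique if one further requires Σ_{i∈C} A_i φ_i = 0). -/

import Mathlib

open Finset

noncomputable section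

/-- A combinatorial staggered mesh: primary cells `C`, dual cells (vertices) `V`,
edges `E`, with areas, edge lengths, incidence relations and signs. -/
structure StagMesh (C V E : Type) [Fintype C] [Fintype V] [Fintype E]
    [DecidableEq C] [DecidableEq V] where
  /-- primary cell areas -/
  Ac : C → ℝ
  /-- dual cell areas -/
  Av : V → ℝ
  /-- primary edge lengths -/
  l : E → ℝ
  /-- dual edge lengths -/
  d : E → ℝ
  Ac_pos : ∀ i, 0 < Ac i
  Av_pos : ∀ ν, 0 < Av ν
  l_pos : ∀ e, 0 < l e
  d_pos : ∀ e, 0 < d e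
  /-- primary cells incident to an edge -/
  EC : E → Finset C
  /-- vertices (dual cells) incident to an edge -/
  EV : E → Finset V
  /-- sign `n_{e,i}` attached to an incident edge–cell pair -/
  n : E → C → ℝ
  /-- sign `t_{e,ν}` attached to an incident edge–vertex pair -/
  t : E → V → ℝ
  n_sign : ∀ e i, i ∈ EC e → n e i = 1 ∨ n e i = -1
  t_sign : ∀ e ν, ν ∈ EV e → t e ν = 1 ∨ t e ν = -1

namespace StagMesh

variable {C V E : Type} [Fintype C] [Fintype V] [Fintype E]
  [DecidableEq C] [DecidableEq V]

/-- diamond area `A_e = (1/2) l_e d_e` -/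
def Ae (M : StagMesh C V E) (e : E) : ℝ := (1 / 2) * M.l e * M.d e

/-- discrete gradient `[∇_h φ]_e = -(1/d_e) Σ_{i ~ e} n_{e,i} φ_i` -/
def grad (M : StagMesh C V E) (φ : C → ℝ) : E → ℝ :=
  fun e => -(1 / M.d e) * ∑ i ∈ M.EC e, M.n e i * φ i

/-- discrete skew gradient `[∇̃⊥_h ψ]_e = (1/l_e) Σ_{ν ~ e} t_{e,ν} ψ_ν` -/
def skewGrad (M : StagMesh C V E) (ψ : V → ℝ) : E → ℝ :=
  fun e => (1 / M.l e) * ∑ ν ∈ M.EV e, M.t e ν * ψ ν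

/-- discrete divergence `[∇_h·u]_i = (1/A_i) Σ_{e ~ i} l_e n_{e,i} u_e` -/
def dvg (M : StagMesh C V E) (u : E → ℝ) : C → ℝ :=
  fun i => (1 / M.Ac i) * ∑ e ∈ univ.filter (fun e => i ∈ M.EC e), M.l e * M.n e i * u e

/-- discrete curl `[∇̃_h×u]_ν = -(1/A_ν) Σ_{e ~ ν} d_e t_{e,ν} u_e` -/
def curl (M : StagMesh C V E) (u : E → ℝ) : V → ℝ :=
  fun ν => -(1 / M.Av ν) * ∑ e ∈ univ.filter (fun e => ν ∈ M.EV e), M.d e * M.t e ν * u e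

/-- area-weighted inner product on primary scalar fields -/
def innerC (M : StagMesh C V E) (φ φ' : C → ℝ) : ℝ := ∑ i, M.Ac i * φ i * φ' i

/-- area-weighted inner product on dual scalar fields -/
def innerV (M : StagMesh C V E) (ψ ψ' : V → ℝ) : ℝ := ∑ ν, M.Av ν * ψ ν * ψ' ν

/-- diamond-weighted inner product on discrete vector fields -/
def innerE (M : StagMesh C V E) (u u' : E → ℝ) : ℝ := ∑ e, M.Ae e * u e * u' e

/-- weighted `L²` norm on primary scalar fields -/
noncomputable def normC (M : StagMesh C V E) (φ : C → ℝ) : ℝ := Real.sqrt (M.innerC φ φ)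

/-- weighted `L²` norm on dual scalar fields -/
noncomputable def normV (M : StagMesh C V E) (ψ : V → ℝ) : ℝ := Real.sqrt (M.innerV ψ ψ)

/-- weighted `L²` norm on discrete vector fields -/
noncomputable def normE (M : StagMesh C V E) (u : E → ℝ) : ℝ := Real.sqrt (M.innerE u u)

/-- sign-cancellation condition: for every primary cell `i` and vertex `ν`,
`Σ_{e ~ i, e ~ ν} t_{e,ν} n_{e,i} = 0`. -/
def SgnCancel (M : StagMesh C V E) : Prop :=
  ∀ (i : C) (ν : V),
    ∑ e ∈ univ.filter (fun e => i ∈ M.EC e ∧ ν ∈ M.EV e), M.t e ν * M.n e i = 0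

end StagMesh

open StagMesh

/-! The sign cancellation condition says exactly that `∇̃_h× ∘ ∇_h = 0`. Up to the factor `-1/2`,
`∇̃⊥_h` is the adjoint of `∇̃_h×` for the diamond-weighted inner product, so a curl-free skew
gradient is orthogonal to itself, hence zero. As `∇̃⊥_h` is injective, this gives
`dim ker ∇̃_h× ≤ |E| - |V| = |C| - 1`, while `ker ∇_h` consists of constants, so
`dim range ∇_h ≥ |C| - 1`. The inclusion `range ∇_h ⊆ ker ∇̃_h×` is therefore an equality, and
`ker ∇_h` is exactly the constants. -/

theorem existsUnique_weighted_sum_eq_zero_of_ker_eq_span_one {C X : Type*} [Fintype C]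
    [AddCommGroup X] [Module ℝ X] (f : (C → ℝ) →ₗ[ℝ] X)
    (hf : LinearMap.ker f = Submodule.span ℝ {1}) (w : C → ℝ) (hw : ∀ i, 0 < w i) {x : X}
    (hx : x ∈ LinearMap.range f) : ∃! φ : C → ℝ, ∑ i, w i * φ i = 0 ∧ f φ = x := by
  obtain ⟨φ₀, rfl⟩ := hx
  rcases isEmpty_or_nonempty C with _ | ⟨⟨i₀⟩⟩
  · exact ⟨φ₀, ⟨by simp, rfl⟩, fun _ _ => Subsingleton.elim _ _⟩
  have hw_sum : 0 < ∑ i, w i := Finset.sum_pos (fun i _ => hw i) ⟨i₀, Finset.mem_univ i₀⟩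
  have hf_one : f 1 = 0 := LinearMap.mem_ker.mp (hf ▸ Submodule.mem_span_singleton_self 1)
  have hshift : ∀ (ψ : C → ℝ) (a : ℝ),
      ∑ i, w i * (ψ + a • 1) i = ∑ i, w i * ψ i + (∑ i, w i) * a := by
    intro ψ a
    simp only [Pi.add_apply, Pi.smul_apply, Pi.one_apply, smul_eq_mul, mul_one, mul_add,
      Finset.sum_add_distrib, Finset.sum_mul]
  set φ₁ := φ₀ + (-(∑ i, w i * φ₀ i) / ∑ i, w i) • 1
  have hφ₁_sum : ∑ i, w i * φ₁ i = 0 := by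
    rw [hshift]
    field_simp
    ring
  refine ⟨φ₁, ⟨hφ₁_sum, by simp [φ₁, hf_one]⟩, ?_⟩
  rintro φ ⟨hφ_sum, hφ⟩
  have hdiff : φ - φ₁ ∈ LinearMap.ker f := by simp [φ₁, hφ, hf_one]
  obtain ⟨a, ha⟩ := Submodule.mem_span_singleton.mp (hf ▸ hdiff)
  have hφ_eq : φ = φ₁ + a • 1 := by rw [ha, add_sub_cancel]
  have ha_zero : a = 0 := by
    rw [hφ_eq, hshift, hφ₁_sum, zero_add] at hφ_sum
    exact (mul_eq_zero.mp hφ_sum).resolve_left hw_sum.ne'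
  rw [hφ_eq, ha_zero, zero_smul, add_zero]

namespace StagMesh

variable {C V E : Type} [Fintype C] [Fintype V] [Fintype E] [DecidableEq C] [DecidableEq V]
  (M : StagMesh C V E)

def gradₗ : (C → ℝ) →ₗ[ℝ] (E → ℝ) where
  toFun := M.grad
  map_add' φ φ' := by
    ext e
    simp only [grad, Pi.add_apply, mul_add, Finset.sum_add_distrib]
  map_smul' c φ := by
    ext e
    simp only [grad, Pi.smul_apply, smul_eq_mul, RingHom.id_apply, Finset.mul_sum]
    exact Finset.sum_congr rfl fun i _ => by ring

@[simp]
theorem gradₗ_apply (φ : C → ℝ) : M.gradₗ φ = M.grad φ := rfl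

def skewGradₗ : (V → ℝ) →ₗ[ℝ] (E → ℝ) where
  toFun := M.skewGrad
  map_add' ψ ψ' := by
    ext e
    simp only [skewGrad, Pi.add_apply, mul_add, Finset.sum_add_distrib]
  map_smul' c ψ := by
    ext e
    simp only [skewGrad, Pi.smul_apply, smul_eq_mul, RingHom.id_apply, Finset.mul_sum]
    exact Finset.sum_congr rfl fun ν _ => by ring

@[simp]
theorem skewGradₗ_apply (ψ : V → ℝ) : M.skewGradₗ ψ = M.skewGrad ψ := rfl

def curlₗ : (E → ℝ) →ₗ[ℝ] (V → ℝ) where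
  toFun := M.curl
  map_add' u u' := by
    ext ν
    simp only [curl, Pi.add_apply, mul_add, Finset.sum_add_distrib]
  map_smul' c u := by
    ext ν
    simp only [curl, Pi.smul_apply, smul_eq_mul, RingHom.id_apply, Finset.mul_sum]
    exact Finset.sum_congr rfl fun e _ => by ring

@[simp]
theorem curlₗ_apply (u : E → ℝ) : M.curlₗ u = M.curl u := rfl

theorem curl_grad (hsc : M.SgnCancel) (φ : C → ℝ) : M.curl (M.grad φ) = 0 := by
  ext ν
  have hterm : ∀ e, M.d e * M.t e ν * M.grad φ e = -∑ i ∈ M.EC e, M.t e ν * M.n e i * φ i := by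
    intro e
    have := (M.d_pos e).ne'
    simp only [grad, Finset.mul_sum, ← Finset.sum_neg_distrib]
    refine Finset.sum_congr rfl fun i _ => ?_
    field_simp
  have hswap : ∑ e ∈ univ.filter (fun e => ν ∈ M.EV e), ∑ i ∈ M.EC e, M.t e ν * M.n e i * φ i
      = ∑ i, (∑ e ∈ univ.filter (fun e => i ∈ M.EC e ∧ ν ∈ M.EV e), M.t e ν * M.n e i) * φ i := by
    simp only [Finset.sum_mul]
    exact Finset.sum_comm' fun e i => by
      simp only [Finset.mem_filter, Finset.mem_univ, true_and]
      tauto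
  simp [curl, hterm, Finset.sum_neg_distrib, hswap, hsc _ ν]

theorem innerE_skewGrad (u : E → ℝ) (ψ : V → ℝ) :
    M.innerE u (M.skewGrad ψ) = -(1 / 2) * M.innerV (M.curl u) ψ := by
  have hterm : ∀ e, M.Ae e * u e * M.skewGrad ψ e
      = ∑ ν ∈ M.EV e, 1 / 2 * (M.d e * M.t e ν * u e * ψ ν) := by
    intro e
    have := (M.l_pos e).ne'
    simp only [Ae, skewGrad, Finset.mul_sum]
    refine Finset.sum_congr rfl fun ν _ => ?_
    field_simp
  have hcurl : ∀ ν, M.Av ν * M.curl u ν * ψ ν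
      = -∑ e ∈ univ.filter (fun e => ν ∈ M.EV e), M.d e * M.t e ν * u e * ψ ν := by
    intro ν
    have := (M.Av_pos ν).ne'
    simp only [curl, ← Finset.sum_mul]
    field_simp
  simp only [innerE, innerV, hterm, hcurl]
  rw [Finset.sum_comm' (t' := univ) (s' := fun ν => univ.filter (fun e => ν ∈ M.EV e))
    (fun e ν => by simp)]
  simp [Finset.mul_sum, Finset.sum_neg_distrib]

theorem eq_zero_of_innerE_self_eq_zero {u : E → ℝ} (hu : M.innerE u u = 0) : u = 0 := by
  have hAe : ∀ e, 0 < M.Ae e := fun e => by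
    have := M.l_pos e
    have := M.d_pos e
    unfold Ae
    positivity
  rw [innerE, Finset.sum_eq_zero_iff_of_nonneg fun e _ => by
    rw [mul_assoc]; exact mul_nonneg (hAe e).le (mul_self_nonneg _)] at hu
  ext e
  simpa [mul_assoc, (hAe e).ne'] using hu e (mem_univ e)

theorem disjoint_ker_curlₗ_range_skewGradₗ :
    Disjoint (LinearMap.ker M.curlₗ) (LinearMap.range M.skewGradₗ) := by
  rw [Submodule.disjoint_def]
  rintro _ hcurl ⟨ψ, rfl⟩
  rw [LinearMap.mem_ker, curlₗ_apply, skewGradₗ_apply] at hcurl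
  apply M.eq_zero_of_innerE_self_eq_zero
  rw [skewGradₗ_apply, M.innerE_skewGrad, hcurl]
  simp [innerV]

theorem finrank_ker_curlₗ_add_card_le (hks : ∀ ψ : V → ℝ, M.skewGrad ψ = 0 → ψ = 0) :
    Module.finrank ℝ (LinearMap.ker M.curlₗ) + Fintype.card V ≤ Fintype.card E := by
  have hinj : Function.Injective M.skewGradₗ :=
    LinearMap.ker_eq_bot.mp (LinearMap.ker_eq_bot'.mpr hks)
  have := Submodule.finrank_add_finrank_le_of_disjoint M.disjoint_ker_curlₗ_range_skewGradₗ
  rwa [LinearMap.finrank_range_of_inj hinj, Module.finrank_fintype_fun_eq_card,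
    Module.finrank_fintype_fun_eq_card] at this

theorem ker_gradₗ_le_span_one (hkg : ∀ φ : C → ℝ, M.grad φ = 0 → ∀ i j : C, φ i = φ j) :
    LinearMap.ker M.gradₗ ≤ Submodule.span ℝ {1} := by
  intro φ hφ
  rcases isEmpty_or_nonempty C with _ | ⟨⟨i₀⟩⟩
  · exact Subsingleton.elim 0 φ ▸ Submodule.zero_mem _
  refine Submodule.mem_span_singleton.mpr ⟨φ i₀, funext fun i => ?_⟩
  simpa using (hkg φ hφ i i₀).symm

theorem finrank_ker_gradₗ_le_one (hkg : ∀ φ : C → ℝ, M.grad φ = 0 → ∀ i j : C, φ i = φ j) :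
    Module.finrank ℝ (LinearMap.ker M.gradₗ) ≤ 1 :=
  (Submodule.finrank_mono (M.ker_gradₗ_le_span_one hkg)).trans
    (by simpa using finrank_span_le_card (R := ℝ) ({1} : Set (C → ℝ)))

theorem range_gradₗ_le_ker_curlₗ (hsc : M.SgnCancel) :
    LinearMap.range M.gradₗ ≤ LinearMap.ker M.curlₗ := by
  rintro _ ⟨φ, rfl⟩
  exact M.curl_grad hsc φ

theorem range_gradₗ_eq_ker_curlₗ (hsc : M.SgnCancel)
    (heuler : Fintype.card C + Fintype.card V = Fintype.card E + 1)
    (hks : ∀ ψ : V → ℝ, M.skewGrad ψ = 0 → ψ = 0)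
    (hkg : ∀ φ : C → ℝ, M.grad φ = 0 → ∀ i j : C, φ i = φ j) :
    LinearMap.range M.gradₗ = LinearMap.ker M.curlₗ := by
  refine Submodule.eq_of_le_of_finrank_le (M.range_gradₗ_le_ker_curlₗ hsc) ?_
  have := LinearMap.finrank_range_add_finrank_ker M.gradₗ
  rw [Module.finrank_fintype_fun_eq_card] at this
  have := M.finrank_ker_gradₗ_le_one hkg
  have := M.finrank_ker_curlₗ_add_card_le hks
  omega

theorem ker_gradₗ_eq_span_one (hsc : M.SgnCancel)
    (heuler : Fintype.card C + Fintype.card V = Fintype.card E + 1)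
    (hks : ∀ ψ : V → ℝ, M.skewGrad ψ = 0 → ψ = 0)
    (hkg : ∀ φ : C → ℝ, M.grad φ = 0 → ∀ i j : C, φ i = φ j) :
    LinearMap.ker M.gradₗ = Submodule.span ℝ {1} := by
  refine Submodule.eq_of_le_of_finrank_le (M.ker_gradₗ_le_span_one hkg) ?_
  have := LinearMap.finrank_range_add_finrank_ker M.gradₗ
  rw [M.range_gradₗ_eq_ker_curlₗ hsc heuler hks hkg, Module.finrank_fintype_fun_eq_card] at this
  have := M.finrank_ker_curlₗ_add_card_le hks
  have := finrank_span_le_card (R := ℝ) ({1} : Set (C → ℝ))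
  simp only [Set.toFinset_singleton, Finset.card_singleton] at this
  omega

end StagMesh

/-- discrete irrotational fields are gradients: under the standing
mesh hypotheses, every discrete vector field `u` with `∇̃_h×u = 0` is `∇_h φ`
for some primary scalar field `φ`, unique up to an additive constant, and unique
if one requires `Σ A_i φ_i = 0`. -/
theorem curlFree_is_grad
    {C V E : Type} [Fintype C] [Fintype V] [Fintype E]
    [DecidableEq C] [DecidableEq V]
    (M : StagMesh C V E)
    (hsc : M.SgnCancel)
    (heuler : Fintype.card C + Fintype.card V = Fintype.card E + 1)
    (hks : ∀ ψ : V → ℝ, M.skewGrad ψ = 0 → ψ = 0)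
    (hkg : ∀ φ : C → ℝ, M.grad φ = 0 → ∀ i j : C, φ i = φ j)
    (u : E → ℝ) (hu : M.curl u = 0) :
    (∃ φ : C → ℝ, u = M.grad φ) ∧
    (∀ φ φ' : C → ℝ, u = M.grad φ → u = M.grad φ' → ∃ c : ℝ, ∀ i, φ i = φ' i + c) ∧
    (∃! φ : C → ℝ, (∑ i, M.Ac i * φ i) = 0 ∧ u = M.grad φ) := by
  have hrange := M.range_gradₗ_eq_ker_curlₗ hsc heuler hks hkg
  have hker := M.ker_gradₗ_eq_span_one hsc heuler hks hkg
  have hu_range : u ∈ LinearMap.range M.gradₗ := hrange ▸ LinearMap.mem_ker.mpr hu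
  refine ⟨?_, fun φ φ' hφ hφ' => ?_, ?_⟩
  · obtain ⟨φ, hφ⟩ := hu_range
    exact ⟨φ, hφ.symm⟩
  · have hdiff : φ - φ' ∈ LinearMap.ker M.gradₗ := by
      rw [LinearMap.mem_ker, map_sub, gradₗ_apply, gradₗ_apply, ← hφ, ← hφ', sub_self]
    obtain ⟨c, hc⟩ := Submodule.mem_span_singleton.mp (hker ▸ hdiff)
    exact ⟨c, fun i => by simpa [sub_eq_iff_eq_add'] using (congrFun hc i).symm⟩
  · simpa only [gradₗ_apply, eq_comm (a := u)] using
      existsUnique_weighted_sum_eq_zero_of_ker_eq_span_one M.gradₗ hker M.Ac M.Ac_pos hu_range
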